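/- The ∀R case (Δ₁ side) of the interpolation construction: suppose ∀x. A[x] ∈ Δ₁, a is a variable not free in Γ₁ ∪ Γ₂ ∪ Δ₁ ∪ Δ₂, and C'[a] interpolates the premise, i.e., Γ₁ ⊢ Δ₁, A[a], C'[a] and C'[a], Γ₂ ⊢ Δ₂ are derivable. Then ∃x. C'[x] interpolates the conclusion: Γ₁ ⊢ Δ₁, ∃x. C'[x] and ∃x. C'[x], Γ₂ ⊢ Δ₂ are derivable. -/

import Mathlib

namespace Craig

abbrev var : Type := Nat
abbrev tm : Type := var
abbrev pred : Type := Nat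

inductive form : Type
  | P : pred → List tm → form
  | Bot : form
  | Top : form
  | And : form → form → form
  | Or : form → form → form
  | Not : form → form
  | FAll : form → form
  | FEx : form → form
  deriving DecidableEq

def liftSub (s : var → tm) : var → tm
  | 0 => 0
  | n + 1 => (s n) + 1

def fsubst (s : var → tm) : form → form
  | .P i tms => .P i (tms.map s)
  | .Bot => .Bot
  | .Top => .Top
  | .And A B => .And (fsubst s A) (fsubst s B)
  | .Or A B => .Or (fsubst s A) (fsubst s B)
  | .Not A => .Not (fsubst s A)
  | .FAll A => .FAll (fsubst (liftSub s) A)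
  | .FEx A => .FEx (fsubst (liftSub s) A)

def preSuc : List Nat → List Nat
  | [] => []
  | 0 :: l => preSuc l
  | (n + 1) :: l => n :: preSuc l

def fv : form → List var
  | .P _ tms => tms
  | .Bot => []
  | .Top => []
  | .And A B => fv A ++ fv B
  | .Or A B => fv A ++ fv B
  | .Not A => fv A
  | .FAll A => preSuc (fv A)
  | .FEx A => preSuc (fv A)

def posneg : form → Set pred × Set pred
  | .P i _ => ({i}, ∅)
  | .Bot => (∅, ∅)
  | .Top => (∅, ∅)
  | .And A B => ((posneg A).1 ∪ (posneg B).1, (posneg A).2 ∪ (posneg B).2)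
  | .Or A B => ((posneg A).1 ∪ (posneg B).1, (posneg A).2 ∪ (posneg B).2)
  | .Not A => ((posneg A).2, (posneg A).1)
  | .FAll A => posneg A
  | .FEx A => posneg A

def pos (A : form) : Set pred := (posneg A).1
def neg (A : form) : Set pred := (posneg A).2

def fAll (a : var) (A : form) : form :=
  .FAll (fsubst (fun v => if v = a then 0 else v + 1) A)
def fEx (a : var) (A : form) : form :=
  .FEx (fsubst (fun v => if v = a then 0 else v + 1) A)

def FAll_inst (t : tm) : form → form
  | .FAll A => fsubst (fun v => match v with | 0 => t | n + 1 => n) A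
  | A => A

def FEx_inst (t : tm) : form → form
  | .FEx A => fsubst (fun v => match v with | 0 => t | n + 1 => n) A
  | A => A

abbrev Seq : Type := Set form × Set form

def fvs (S : Set form) : Set var := ⋃ A ∈ S, {v | v ∈ fv A}

inductive Deriv : Type
  | Init : Seq → Deriv
  | BotL : Seq → Deriv
  | TopR : Seq → Deriv
  | AndL : Seq → Deriv → Deriv
  | AndR : Seq → Deriv → Deriv → Deriv
  | OrL : Seq → Deriv → Deriv → Deriv
  | OrR : Seq → Deriv → Deriv
  | NotL : Seq → Deriv → Deriv
  | NotR : Seq → Deriv → Deriv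
  | AllL : Seq → Deriv → Deriv
  | AllR : Seq → Deriv → Deriv
  | ExL : Seq → Deriv → Deriv
  | ExR : Seq → Deriv → Deriv
  | WL : Seq → Deriv → Deriv
  | WR : Seq → Deriv → Deriv

def root : Deriv → Seq
  | .Init s => s
  | .BotL s => s
  | .TopR s => s
  | .AndL s _ => s
  | .AndR s _ _ => s
  | .OrL s _ _ => s
  | .OrR s _ => s
  | .NotL s _ => s
  | .NotR s _ => s
  | .AllL s _ => s
  | .AllR s _ => s
  | .ExL s _ => s
  | .ExR s _ => s
  | .WL s _ => s
  | .WR s _ => s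

def is_deriv : Deriv → Prop
  | .Init s => s.1.Finite ∧ s.2.Finite ∧ ∃ A, A ∈ s.1 ∧ A ∈ s.2
  | .BotL s => s.1.Finite ∧ s.2.Finite ∧ form.Bot ∈ s.1
  | .TopR s => s.1.Finite ∧ s.2.Finite ∧ form.Top ∈ s.2
  | .AndL s d => s.1.Finite ∧ s.2.Finite ∧
      ∃ A B, form.And A B ∈ s.1 ∧ is_deriv d ∧ root d = ({A, B} ∪ s.1, s.2)
  | .AndR s dl dr => s.1.Finite ∧ s.2.Finite ∧
      ∃ A B, form.And A B ∈ s.2 ∧ is_deriv dl ∧ root dl = (s.1, s.2 ∪ {A}) ∧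
        is_deriv dr ∧ root dr = (s.1, s.2 ∪ {B})
  | .OrL s dl dr => s.1.Finite ∧ s.2.Finite ∧
      ∃ A B, form.Or A B ∈ s.1 ∧ is_deriv dl ∧ root dl = ({A} ∪ s.1, s.2) ∧
        is_deriv dr ∧ root dr = ({B} ∪ s.1, s.2)
  | .OrR s d => s.1.Finite ∧ s.2.Finite ∧
      ∃ A B, form.Or A B ∈ s.2 ∧ is_deriv d ∧ root d = (s.1, s.2 ∪ {A, B})
  | .NotL s d => s.1.Finite ∧ s.2.Finite ∧
      ∃ C, form.Not C ∈ s.1 ∧ is_deriv d ∧ root d = (s.1, s.2 ∪ {C})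
  | .NotR s d => s.1.Finite ∧ s.2.Finite ∧
      ∃ C, form.Not C ∈ s.2 ∧ is_deriv d ∧ root d = ({C} ∪ s.1, s.2)
  | .AllL s d => s.1.Finite ∧ s.2.Finite ∧
      ∃ A a t, fAll a A ∈ s.1 ∧ is_deriv d ∧
        root d = ({FAll_inst t (fAll a A)} ∪ s.1, s.2)
  | .AllR s d => s.1.Finite ∧ s.2.Finite ∧
      ∃ a A, fAll a A ∈ s.2 ∧ a ∉ fvs (s.1 ∪ s.2) ∧ is_deriv d ∧
        root d = (s.1, s.2 ∪ {A})
  | .ExL s d => s.1.Finite ∧ s.2.Finite ∧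
      ∃ a A, fEx a A ∈ s.1 ∧ a ∉ fvs (s.1 ∪ s.2) ∧ is_deriv d ∧
        root d = ({A} ∪ s.1, s.2)
  | .ExR s d => s.1.Finite ∧ s.2.Finite ∧
      ∃ A a t, fEx a A ∈ s.2 ∧ is_deriv d ∧
        root d = (s.1, s.2 ∪ {FEx_inst t (fEx a A)})
  | .WL s d => ∃ Γ Δ A, Γ.Finite ∧ Δ.Finite ∧ is_deriv d ∧ root d = (Γ, Δ) ∧
      s = ({A} ∪ Γ, Δ)
  | .WR s d => ∃ Γ Δ A, Γ.Finite ∧ Δ.Finite ∧ is_deriv d ∧ root d = (Γ, Δ) ∧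
      s = (Γ, Δ ∪ {A})

def derivable (s : Seq) : Prop := ∃ d, is_deriv d ∧ root d = s

/-!
Both halves are short derivations ending in a quantifier rule with eigenvariable `a`, which is
legitimate because `a` is bound in `∃x. C'[x]` and free nowhere else in the conclusion.
`Γ₁ ⊢ Δ₁, ∃x. C'[x]` follows from the first premise by WR, ∃R (instantiating at `a`) and ∀R;
`∃x. C'[x], Γ₂ ⊢ Δ₂` follows from the second premise by WL and ∃L.
-/

lemma liftSub_comp (σ τ : var → tm) : liftSub (σ ∘ τ) = liftSub σ ∘ liftSub τ := by
  funext v; cases v <;> rfl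

lemma liftSub_id : liftSub id = id := by
  funext v; cases v <;> rfl

lemma fsubst_fsubst (σ τ : var → tm) (A : form) :
    fsubst σ (fsubst τ A) = fsubst (σ ∘ τ) A := by
  induction A generalizing σ τ <;> simp [fsubst, liftSub_comp, *]

lemma fsubst_id (A : form) : fsubst id A = A := by
  induction A <;> simp [fsubst, liftSub_id, *]

lemma FEx_inst_fEx (a : var) (C : form) : FEx_inst a (fEx a C) = C := by
  have h : (fun v => match v with | 0 => a | n + 1 => n) ∘
      (fun v : var => if v = a then 0 else v + 1) = id := by
    funext v; by_cases hv : v = a <;> simp [hv]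
  rw [fEx, FEx_inst, fsubst_fsubst, h, fsubst_id]

lemma mem_preSuc {n : ℕ} {l : List ℕ} : n ∈ preSuc l ↔ n + 1 ∈ l := by
  induction l with
  | nil => simp [preSuc]
  | cons m l ih => cases m <;> simp [preSuc, ih]

lemma preSuc_map_liftSub (σ : var → tm) (l : List var) :
    preSuc (l.map (liftSub σ)) = (preSuc l).map σ := by
  induction l with
  | nil => rfl
  | cons v l ih => cases v <;> simp [liftSub, preSuc, ih]

lemma fv_fsubst (σ : var → tm) (A : form) : fv (fsubst σ A) = (fv A).map σ := by
  induction A generalizing σ <;> simp [fv, fsubst, preSuc_map_liftSub, *]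

lemma notMem_fv_fEx (a : var) (C : form) : a ∉ fv (fEx a C) := by
  simp only [fEx, fv, fv_fsubst, mem_preSuc, List.mem_map, not_exists, not_and]
  intro v _
  split_ifs with hv <;> simp [hv]

lemma fvs_union (S T : Set form) : fvs (S ∪ T) = fvs S ∪ fvs T :=
  Set.biUnion_union S T _

lemma notMem_fvs_singleton_fEx (a : var) (C : form) : a ∉ fvs {fEx a C} := by
  simpa [fvs] using notMem_fv_fEx a C

lemma is_deriv.root_finite {d : Deriv} (h : is_deriv d) :
    (root d).1.Finite ∧ (root d).2.Finite := by
  cases d with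
  | WL s d =>
    obtain ⟨Γ, Δ, B, hΓ, hΔ, -, -, rfl⟩ := h
    exact ⟨(Set.finite_singleton B).union hΓ, hΔ⟩
  | WR s d =>
    obtain ⟨Γ, Δ, B, hΓ, hΔ, -, -, rfl⟩ := h
    exact ⟨hΓ, hΔ.union (Set.finite_singleton B)⟩
  | _ => exact ⟨h.1, h.2.1⟩

namespace derivable

variable {Γ Δ : Set form}

lemma finite {s : Seq} (h : derivable s) : s.1.Finite ∧ s.2.Finite := by
  obtain ⟨d, hd, rfl⟩ := h
  exact hd.root_finite

lemma weakenLeft (B : form) (h : derivable (Γ, Δ)) : derivable ({B} ∪ Γ, Δ) := by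
  obtain ⟨hΓ, hΔ⟩ := h.finite
  obtain ⟨d, hd, hr⟩ := h
  exact ⟨.WL _ d, ⟨Γ, Δ, B, hΓ, hΔ, hd, hr, rfl⟩, rfl⟩

lemma weakenRight (B : form) (h : derivable (Γ, Δ)) : derivable (Γ, Δ ∪ {B}) := by
  obtain ⟨hΓ, hΔ⟩ := h.finite
  obtain ⟨d, hd, hr⟩ := h
  exact ⟨.WR _ d, ⟨Γ, Δ, B, hΓ, hΔ, hd, hr, rfl⟩, rfl⟩

lemma allRight {a : var} {A : form} (hmem : fAll a A ∈ Δ) (ha : a ∉ fvs (Γ ∪ Δ))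
    (h : derivable (Γ, Δ ∪ {A})) : derivable (Γ, Δ) := by
  obtain ⟨hΓ, hΔ⟩ := h.finite
  obtain ⟨d, hd, hr⟩ := h
  exact ⟨.AllR (Γ, Δ) d, ⟨hΓ, hΔ.subset Set.subset_union_left, a, A, hmem, ha, hd, hr⟩, rfl⟩

lemma exLeft {a : var} {A : form} (hmem : fEx a A ∈ Γ) (ha : a ∉ fvs (Γ ∪ Δ))
    (h : derivable ({A} ∪ Γ, Δ)) : derivable (Γ, Δ) := by
  obtain ⟨hΓ, hΔ⟩ := h.finite
  obtain ⟨d, hd, hr⟩ := h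
  exact ⟨.ExL (Γ, Δ) d, ⟨hΓ.subset Set.subset_union_right, hΔ, a, A, hmem, ha, hd, hr⟩, rfl⟩

lemma exRight {a t : var} {A : form} (hmem : fEx a A ∈ Δ)
    (h : derivable (Γ, Δ ∪ {FEx_inst t (fEx a A)})) : derivable (Γ, Δ) := by
  obtain ⟨hΓ, hΔ⟩ := h.finite
  obtain ⟨d, hd, hr⟩ := h
  exact ⟨.ExR (Γ, Δ) d, ⟨hΓ, hΔ.subset Set.subset_union_left, A, a, t, hmem, hd, hr⟩, rfl⟩

end derivable

theorem allR_interpolation_case (Γ₁ Γ₂ Δ₁ Δ₂ : Set form) (a : var) (A C' : form)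
    (hmem : fAll a A ∈ Δ₁)
    (ha : a ∉ fvs (Γ₁ ∪ Γ₂ ∪ Δ₁ ∪ Δ₂))
    (h1 : derivable (Γ₁, Δ₁ ∪ {A, C'}))
    (h2 : derivable ({C'} ∪ Γ₂, Δ₂)) :
    derivable (Γ₁, Δ₁ ∪ {fEx a C'}) ∧
    derivable ({fEx a C'} ∪ Γ₂, Δ₂) := by
  simp only [fvs_union, Set.mem_union, not_or] at ha
  obtain ⟨⟨⟨haΓ₁, haΓ₂⟩, haΔ₁⟩, haΔ₂⟩ := ha
  constructor
  · have ha₁ : a ∉ fvs (Γ₁ ∪ (Δ₁ ∪ {fEx a C'})) := by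
      simp only [fvs_union, Set.mem_union, not_or]
      exact ⟨haΓ₁, haΔ₁, notMem_fvs_singleton_fEx a C'⟩
    refine .allRight (Set.mem_union_left _ hmem) ha₁
      (.exRight (a := a) (t := a) (A := C') (by simp) ?_)
    rw [FEx_inst_fEx, show Δ₁ ∪ {fEx a C'} ∪ {A} ∪ {C'} = Δ₁ ∪ {A, C'} ∪ {fEx a C'} by
      ext; simp only [Set.mem_union, Set.mem_insert_iff, Set.mem_singleton_iff]; tauto]
    exact h1.weakenRight _
  · have ha₂ : a ∉ fvs ({fEx a C'} ∪ Γ₂ ∪ Δ₂) := by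
      simp only [fvs_union, Set.mem_union, not_or]
      exact ⟨⟨notMem_fvs_singleton_fEx a C', haΓ₂⟩, haΔ₂⟩
    refine .exLeft (Set.mem_union_left _ rfl) ha₂ ?_
    rw [Set.union_left_comm]
    exact h2.weakenLeft _

end Craig
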